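/- Let H = {0, 89, 178, 267, 356, 445, 534} ⊆ ℤ/623ℤ and let B = {0, 1, 7, 207, 426, 463, 501, 531} ⊆ ℤ/623ℤ. Then H is a subgroup of ℤ/623ℤ of order 7, and the eleven difference sets Δ(8ⁱ·B) for i = 0, 1, …, 10 are pairwise disjoint, each has cardinality 56, each is disjoint from H, and their union together with H \ {0} is (ℤ/623ℤ) \ {0}. -/
import Mathlib


/-- The set of differences `ΔB = {a - c : a, c ∈ B, a ≠ c}`. -/
def diffSet (B : Finset (ZMod 623)) : Finset (ZMod 623) :=
  ((B ×ˢ B).filter fun p => p.1 ≠ p.2).image fun p => p.1 - p.2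

/-- The subgroup block `H = {0, 89, 178, 267, 356, 445, 534}` of `ℤ/623ℤ`. -/
def Hblock : Finset (ZMod 623) := {0, 89, 178, 267, 356, 445, 534}

/-- The base block `B`. -/
def baseBlock : Finset (ZMod 623) := {0, 1, 7, 207, 426, 463, 501, 531}

/-- The dilates `8ⁱ · B` of the base block, for `i = 0, 1, …, 10`. -/
def dilate (i : Fin 11) : Finset (ZMod 623) :=
  baseBlock.image fun x => (8 : ZMod 623) ^ (i : ℕ) * x

def D0 : Finset (ZMod 623) := {1, 6, 7, 30, 37, 38, 68, 75, 92, 93, 99, 105, 122, 123, 129, 160, 161, 167, 197, 198, 200, 204, 206, 207, 219, 256, 294, 299, 324, 329, 367, 404, 416, 417, 419, 423, 425, 426, 456, 462, 463, 494, 500, 501, 518, 524, 530, 531, 548, 555, 585, 586, 593, 616, 617, 622}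
def D1 : Finset (ZMod 623) := {8, 23, 34, 42, 48, 56, 79, 90, 100, 113, 117, 121, 140, 169, 179, 213, 214, 217, 221, 237, 240, 262, 269, 270, 285, 293, 296, 304, 319, 327, 330, 338, 353, 354, 361, 383, 386, 402, 406, 409, 410, 444, 454, 483, 502, 506, 510, 523, 533, 544, 567, 575, 581, 589, 600, 615}
def D2 : Finset (ZMod 623) := {9, 27, 51, 60, 64, 97, 101, 106, 124, 126, 133, 148, 157, 165, 175, 177, 184, 186, 212, 227, 239, 272, 278, 281, 283, 287, 291, 310, 313, 332, 336, 340, 342, 345, 351, 384, 396, 411, 437, 439, 446, 448, 458, 466, 475, 490, 497, 499, 517, 522, 526, 559, 563, 572, 596, 614}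
def D3 : Finset (ZMod 623) := {10, 12, 43, 53, 62, 72, 74, 111, 143, 153, 154, 164, 170, 173, 182, 185, 196, 215, 216, 225, 226, 228, 238, 242, 244, 254, 268, 307, 316, 355, 369, 379, 381, 385, 395, 397, 398, 407, 408, 427, 438, 441, 450, 453, 459, 469, 470, 480, 512, 549, 551, 561, 570, 580, 611, 613}
def D4 : Finset (ZMod 623) := {14, 22, 31, 35, 36, 45, 47, 61, 66, 67, 69, 80, 83, 96, 102, 114, 127, 138, 141, 149, 163, 199, 210, 234, 265, 275, 279, 301, 322, 344, 348, 358, 389, 413, 424, 460, 474, 482, 485, 496, 509, 521, 527, 540, 543, 554, 556, 557, 562, 576, 578, 587, 588, 592, 601, 609}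
def D5 : Finset (ZMod 623) := {3, 17, 41, 54, 58, 71, 84, 87, 95, 112, 118, 135, 142, 145, 176, 189, 193, 230, 247, 248, 251, 260, 263, 277, 280, 288, 289, 292, 331, 334, 335, 343, 346, 360, 363, 372, 375, 376, 393, 430, 434, 447, 478, 481, 488, 505, 511, 528, 536, 539, 552, 565, 569, 582, 606, 620}
def D6 : Finset (ZMod 623) := {24, 29, 49, 55, 73, 86, 107, 110, 115, 136, 137, 139, 156, 159, 162, 166, 180, 188, 191, 211, 235, 252, 266, 273, 276, 295, 298, 302, 321, 325, 328, 347, 350, 357, 371, 388, 412, 432, 435, 443, 457, 461, 464, 467, 484, 486, 487, 508, 513, 516, 537, 550, 568, 574, 594, 599}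
def D7 : Finset (ZMod 623) := {2, 11, 26, 39, 50, 65, 76, 82, 108, 132, 134, 147, 150, 158, 181, 183, 192, 194, 231, 232, 233, 257, 258, 259, 282, 284, 297, 308, 315, 326, 339, 341, 364, 365, 366, 390, 391, 392, 429, 431, 440, 442, 465, 473, 476, 489, 491, 515, 541, 547, 558, 573, 584, 597, 612, 621}
def D8 : Finset (ZMod 623) := {5, 13, 15, 16, 18, 21, 28, 33, 46, 70, 88, 103, 116, 174, 187, 190, 195, 202, 203, 208, 218, 220, 223, 236, 241, 290, 306, 311, 312, 317, 333, 382, 387, 400, 403, 405, 415, 420, 421, 428, 433, 436, 449, 507, 520, 535, 553, 577, 590, 595, 602, 605, 607, 608, 610, 618}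
def D9 : Finset (ZMod 623) := {4, 19, 40, 44, 59, 63, 81, 85, 104, 109, 120, 125, 128, 144, 146, 168, 172, 201, 205, 224, 245, 250, 253, 255, 264, 274, 305, 309, 314, 318, 349, 359, 368, 370, 373, 378, 399, 418, 422, 451, 455, 477, 479, 495, 498, 503, 514, 519, 538, 542, 560, 564, 579, 583, 604, 619}
def D10 : Finset (ZMod 623) := {20, 25, 32, 52, 57, 77, 78, 91, 94, 98, 119, 130, 131, 151, 152, 155, 171, 209, 222, 229, 243, 246, 249, 261, 271, 286, 300, 303, 320, 323, 337, 352, 362, 374, 377, 380, 394, 401, 414, 452, 468, 471, 472, 492, 493, 504, 525, 529, 532, 545, 546, 566, 571, 591, 598, 603}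

set_option maxRecDepth 100000
set_option maxHeartbeats 4000000 in
def DDF : Fin 11 → Finset (ZMod 623) := ![D0,D1,D2,D3,D4,D5,D6,D7,D8,D9,D10]

set_option maxRecDepth 100000 in
set_option maxHeartbeats 4000000 in
lemma factA : ∀ i : Fin 11, diffSet (dilate i) = DDF i := by decide

set_option maxRecDepth 100000 in
set_option maxHeartbeats 4000000 in
lemma factB : ∀ i : Fin 11, DDF i = (DDF 0).image (fun x => (8 : ZMod 623) ^ (i : ℕ) * x) := by decide

set_option maxRecDepth 100000 in
set_option maxHeartbeats 4000000 in
lemma factC : ∀ i : Fin 11, (DDF i).card = 56 := by decide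

set_option maxRecDepth 100000 in
set_option maxHeartbeats 4000000 in
lemma factD : ∀ i : Fin 11, Disjoint (DDF i) Hblock := by decide

set_option maxRecDepth 100000 in
set_option maxHeartbeats 4000000 in
lemma factE : ∀ k : Fin 11, k ≠ 0 → Disjoint (DDF 0) (DDF k) := by decide

set_option maxRecDepth 100000 in
set_option maxHeartbeats 4000000 in
lemma factF : ∀ i : Fin 11, (0 : ZMod 623) ∉ DDF i := by decide

lemma h8pow11 : (8 : ZMod 623) ^ 11 = 1 := by decide

lemma isUnit8 : IsUnit (8 : ZMod 623) := ⟨⟨8, 78, by decide, by decide⟩, rfl⟩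

lemma inj8 (i : ℕ) : Function.Injective (fun x : ZMod 623 => (8 : ZMod 623) ^ i * x) := by
  intro a b h
  exact (isUnit8.pow i).mul_left_cancel h


set_option maxRecDepth 10000
set_option maxHeartbeats 1000000
/-- `H` is a subgroup of `ℤ/623ℤ` of order `7`, and the eleven difference sets
`Δ(8ⁱ · B)`, `i = 0, …, 10`, are pairwise disjoint, each has cardinality `56`,
each is disjoint from `H`, and their union together with `H \ {0}` is
`ℤ/623ℤ \ {0}`. -/
theorem one_rotational_difference_family_zmod_623_19 :
    (∃ S : AddSubgroup (ZMod 623), (S : Set (ZMod 623)) = (Hblock : Set (ZMod 623))) ∧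
    Hblock.card = 7 ∧
    (∀ i j, i ≠ j → Disjoint (diffSet (dilate i)) (diffSet (dilate j))) ∧
    (∀ i, (diffSet (dilate i)).card = 56) ∧
    (∀ i, Disjoint (diffSet (dilate i)) Hblock) ∧
    (Hblock \ {0}) ∪ (Finset.univ.biUnion fun i => diffSet (dilate i)) =
      Finset.univ \ {0} := by
  have haddI : (Hblock ×ˢ Hblock).image (fun p => p.1 + p.2) = Hblock := by decide
  have hnegI : Hblock.image (fun a => -a) = Hblock := by decide
  have hzero : (0 : ZMod 623) ∈ Hblock := by decide
  have hadd : ∀ a ∈ Hblock, ∀ b ∈ Hblock, a + b ∈ Hblock := by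
    intro a ha b hb
    have hp : (a, b) ∈ Hblock ×ˢ Hblock := Finset.mem_product.2 ⟨ha, hb⟩
    have : a + b ∈ (Hblock ×ˢ Hblock).image (fun p => p.1 + p.2) :=
      Finset.mem_image_of_mem _ hp
    rwa [haddI] at this
  have hneg : ∀ a ∈ Hblock, -a ∈ Hblock := by
    intro a ha
    have : -a ∈ Hblock.image (fun a => -a) := Finset.mem_image_of_mem _ ha
    rwa [hnegI] at this
  have hdisjGen : ∀ i j : Fin 11, i ≠ j → Disjoint (DDF i) (DDF j) := by
    intro i j hij
    have hk : (j - i : Fin 11) ≠ 0 := sub_ne_zero.2 (Ne.symm hij)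
    have hji : (DDF j) = (DDF (j - i + i)) := by rw [sub_add_cancel]
    rw [factB i, hji, factB (j - i + i)]
    have hpow : ∀ x : ZMod 623,
        (8 : ZMod 623) ^ ((j - i + i : Fin 11) : ℕ) * x
          = (8 : ZMod 623) ^ (i : ℕ) * ((8 : ZMod 623) ^ ((j - i : Fin 11) : ℕ) * x) := by
      intro x
      rw [← mul_assoc, ← pow_add]
      congr 1
      rw [pow_eq_pow_mod _ h8pow11, pow_eq_pow_mod ((i : ℕ) + ((j - i : Fin 11) : ℕ)) h8pow11]
      congr 1
      rw [Fin.val_add]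
      omega
    have himg : (DDF 0).image (fun x => (8 : ZMod 623) ^ ((j - i + i : Fin 11) : ℕ) * x)
        = ((DDF 0).image fun x => (8 : ZMod 623) ^ ((j - i : Fin 11) : ℕ) * x).image
            (fun x => (8 : ZMod 623) ^ (i : ℕ) * x) := by
      rw [Finset.image_image]
      exact Finset.image_congr (fun x _ => hpow x)
    rw [himg, ← factB (j - i)]
    exact (Finset.disjoint_image (inj8 (i : ℕ))).2 (factE _ hk)
  refine ⟨⟨⟨⟨⟨{x | x ∈ Hblock}, fun {a b} ha hb => hadd a ha b hb⟩, hzero⟩,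
      fun {a} ha => hneg a ha⟩, rfl⟩, by decide, ?_, ?_, ?_, ?_⟩
  · intro i j hij
    rw [factA i, factA j]
    exact hdisjGen i j hij
  · intro i; rw [factA i]; exact factC i
  · intro i; rw [factA i]; exact factD i
  · have hrw : (Finset.univ.biUnion fun i => diffSet (dilate i))
        = Finset.univ.biUnion fun i => DDF i :=
      Finset.biUnion_congr rfl (fun i _ => factA i)
    rw [hrw]
    have hdisjHU : Disjoint (Hblock \ {0}) (Finset.univ.biUnion fun i => DDF i) := by
      rw [Finset.disjoint_biUnion_right]
      intro i _
      exact Finset.disjoint_of_subset_left (Finset.sdiff_subset) (factD i).symm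
    have hcardB : (Finset.univ.biUnion fun i => DDF i).card = 616 := by
      rw [Finset.card_biUnion (fun i _ j _ hij => hdisjGen i j hij)]
      simp only [factC]
      rw [Finset.sum_const, Finset.card_univ]
      rfl
    have hcardU : ((Hblock \ {0}) ∪ (Finset.univ.biUnion fun i => DDF i)).card = 622 := by
      rw [Finset.card_union_of_disjoint hdisjHU, hcardB]
      have : (Hblock \ {0}).card = 6 := by decide
      rw [this]
    have hsub : ((Hblock \ {0}) ∪ (Finset.univ.biUnion fun i => DDF i))
        ⊆ Finset.univ \ {0} := by
      intro x hx
      rw [Finset.mem_sdiff, Finset.mem_singleton]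
      refine ⟨Finset.mem_univ x, ?_⟩
      rintro rfl
      rw [Finset.mem_union] at hx
      rcases hx with hx | hx
      · exact (Finset.mem_sdiff.1 hx).2 (Finset.mem_singleton_self 0)
      · obtain ⟨i, _, hi⟩ := Finset.mem_biUnion.1 hx
        exact factF i hi
    have hcardT : (Finset.univ \ {0} : Finset (ZMod 623)).card = 622 := by
      rw [Finset.card_sdiff_of_subset (Finset.singleton_subset_iff.2 (Finset.mem_univ 0)),
        Finset.card_singleton, Finset.card_univ, ZMod.card]
    exact Finset.eq_of_subset_of_card_le hsub (le_of_eq (hcardT.trans hcardU.symm))
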